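/- Let v be a join node with children u, w and common bag I = I_u = I_v = I_w. Then g(v,c_v,F_v) = min{ g(u,c_u,F_u) + g(w,c_w,F_w) + ∑_{i∈I} ( f_i(c_v(i)) − f_i(c_u(i)) − f_i(c_w(i)) ) }, where the minimum is over all partitions F_v = F_u ⊎ F_w and all decompositions c_v = c_u + c_w with c_u, c_w : I → {0,...,n-1}. -/

import Mathlib

/-- The degree of vertex `i` in `G`. -/
noncomputable def deg {n : ℕ} (G : SimpleGraph (Fin n)) (i : Fin n) : ℕ :=
  (G.neighborSet i).ncard

/-- The edges of `G` both of whose endpoints lie in `S` (the edge set of `G[S]`). -/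
def edgesIn {n : ℕ} (G : SimpleGraph (Fin n)) (S : Set (Fin n)) : Set (Sym2 (Fin n)) :=
  {e | e ∈ G.edgeSet ∧ ∀ i ∈ e, i ∈ S}

/-- `G` is a subgraph of the induced subgraph `H[S]` (viewed as a graph on all of `[n]`):
`G ≤ H` and all edges of `G` lie inside `S`. -/
def SubgraphOn {n : ℕ} (H G : SimpleGraph (Fin n)) (S : Set (Fin n)) : Prop :=
  G ≤ H ∧ ∀ ⦃a b : Fin n⦄, G.Adj a b → a ∈ S ∧ b ∈ S

/-- A (rooted) tree decomposition of a graph `H` on `[n]`: a finite tree `T` with a root,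
bags `bag v ⊆ [n]` covering all vertices, every edge of `H` contained in some bag, and for
every vertex `i` the nodes whose bag contains `i` forming a connected (path-closed) set. -/
structure TreeDecomp (n : ℕ) (H : SimpleGraph (Fin n)) where
  τ : Type
  [finτ : Fintype τ]
  tree : SimpleGraph τ
  isTree : tree.IsTree
  root : τ
  bag : τ → Set (Fin n)
  bag_cover : ∀ i : Fin n, ∃ v, i ∈ bag v
  bag_edge : ∀ ⦃i j : Fin n⦄, H.Adj i j → ∃ v, i ∈ bag v ∧ j ∈ bag v
  bag_conn : ∀ (i : Fin n) (x y : τ) (p : tree.Walk x y), p.IsPath →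
    i ∈ bag x → i ∈ bag y → ∀ v ∈ p.support, i ∈ bag v

namespace TreeDecomp

variable {n : ℕ} {H : SimpleGraph (Fin n)} (td : TreeDecomp n H)

/-- `u` lies in the subtree rooted at `v`: every walk from the root to `u` passes `v`. -/
def desc (v u : td.τ) : Prop := ∀ p : td.tree.Walk td.root u, v ∈ p.support

/-- `u` is a child of `v` in the rooted tree. -/
def child (v u : td.τ) : Prop := td.tree.Adj v u ∧ td.desc v u

/-- `I(T_v)`: the union of all bags over the subtree rooted at `v`. -/
def bags (v : td.τ) : Set (Fin n) := {i | ∃ u, td.desc v u ∧ i ∈ td.bag u}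

end TreeDecomp

/-- `g(v, c, F)`: the minimum of `∑_{i ∈ I(T_v)} f i (d_i(G))` over subgraphs
`G ⊆ H[I(T_v)]` with `E(G[I_v]) = F` and `d_i(G) = c i` for all `i ∈ I_v`,
with the convention that the minimum over the empty set is `∞`. -/
noncomputable def gval {n : ℕ} {H : SimpleGraph (Fin n)} (td : TreeDecomp n H)
    (f : Fin n → ℕ → ℤ) (v : td.τ) (c : Fin n → ℕ) (F : Set (Sym2 (Fin n))) :
    WithTop ℤ :=
  sInf {x : WithTop ℤ | ∃ G : SimpleGraph (Fin n), SubgraphOn H G (td.bags v) ∧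
    edgesIn G (td.bag v) = F ∧ (∀ i ∈ td.bag v, deg G i = c i) ∧
    x = ((∑ i ∈ (Set.toFinite (td.bags v)).toFinset, f i (deg G i) : ℤ) : WithTop ℤ)}


section TreeLemmas

open SimpleGraph

namespace TreeDecomp

variable {n : ℕ} {H : SimpleGraph (Fin n)} (td : TreeDecomp n H)

/-- The unique path between two nodes of the tree. -/
noncomputable def pth (x y : td.τ) : td.tree.Walk x y :=
  (td.isTree.existsUnique_path x y).choose

lemma pth_isPath (x y : td.τ) : (td.pth x y).IsPath :=
  (td.isTree.existsUnique_path x y).choose_spec.1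

lemma pth_unique {x y : td.τ} (q : td.tree.Walk x y) (hq : q.IsPath) : q = td.pth x y :=
  (td.isTree.existsUnique_path x y).choose_spec.2 q hq

lemma desc_iff {v x : td.τ} : td.desc v x ↔ v ∈ (td.pth td.root x).support := by
  classical
  constructor
  · intro h; exact h _
  · intro h p
    have hb : p.bypass = td.pth td.root x := td.pth_unique _ p.bypass_isPath
    exact p.support_bypass_subset (by rw [hb]; exact h)

lemma desc_self (x : td.τ) : td.desc x x := fun p => p.end_mem_support

lemma eq_of_mem_take_drop {V : Type*} [DecidableEq V] {G : SimpleGraph V} {a b x y : V}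
    {p : G.Walk a b} (hp : p.IsPath) (hx : x ∈ p.support)
    (h1 : y ∈ (p.takeUntil x hx).support) (h2 : y ∈ (p.dropUntil x hx).support) : y = x := by
  by_contra hne
  have hnd : p.support.Nodup := hp.support_nodup
  rw [← p.take_spec hx, Walk.support_append, List.nodup_append] at hnd
  have h2' : y ∈ (p.dropUntil x hx).support.tail := by
    have hc := (p.dropUntil x hx).support_eq_cons
    rw [hc] at h2
    rcases List.mem_cons.1 h2 with h2 | h2
    · exact absurd h2 hne
    · exact h2
  exact hnd.2.2 y h1 y h2' rfl

lemma pth_singleton {v u : td.τ} (h : td.tree.Adj v u) :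
    td.pth v u = Walk.cons h Walk.nil :=
  (td.pth_unique _ (by simp [Walk.isPath_def, h.ne])).symm

lemma not_mem_pth_root {v u : td.τ} (h : td.child v u) :
    u ∉ (td.pth td.root v).support := by
  classical
  intro hmem
  have hv : v ∈ (td.pth td.root u).support := td.desc_iff.1 h.2
  have ht : (td.pth td.root u).takeUntil v hv = td.pth td.root v :=
    td.pth_unique _ ((td.pth_isPath _ _).takeUntil hv)
  have hu1 : u ∈ ((td.pth td.root u).takeUntil v hv).support := by rw [ht]; exact hmem
  have hu2 : u ∈ ((td.pth td.root u).dropUntil v hv).support := Walk.end_mem_support _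
  exact h.1.ne' (eq_of_mem_take_drop (td.pth_isPath _ _) hv hu1 hu2)

lemma child_getVert_one {v u x : td.τ} (h : td.child v u) (R : td.tree.Walk v x)
    (hR : R.IsPath) (hmem : u ∈ R.support) : R.getVert 1 = u := by
  classical
  have ht : R.takeUntil u hmem = Walk.cons h.1 Walk.nil := by
    rw [td.pth_unique _ (hR.takeUntil hmem), td.pth_singleton h.1]
  have hspec := R.take_spec hmem
  rw [ht, Walk.cons_append, Walk.nil_append] at hspec
  rw [← hspec, Walk.getVert_cons_succ, Walk.getVert_zero]

lemma desc_of_child {v u x : td.τ} (h : td.child v u) (hd : td.desc u x) : td.desc v x := by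
  classical
  rw [td.desc_iff] at hd ⊢
  have ht : (td.pth td.root x).takeUntil u hd = td.pth td.root u :=
    td.pth_unique _ ((td.pth_isPath _ _).takeUntil hd)
  have hv : v ∈ (td.pth td.root u).support := td.desc_iff.1 h.2
  rw [← ht] at hv
  exact Walk.support_takeUntil_subset _ _ hv

lemma child_eq_of_desc {v u w x : td.τ} (hu : td.child v u) (hw : td.child v w)
    (hdu : td.desc u x) (hdw : td.desc w x) : u = w := by
  classical
  have hvp : v ∈ (td.pth td.root x).support := td.desc_iff.1 (td.desc_of_child hu hdu)
  have htk : (td.pth td.root x).takeUntil v hvp = td.pth td.root v :=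
    td.pth_unique _ ((td.pth_isPath _ _).takeUntil hvp)
  have hmem : ∀ z, td.child v z → z ∈ (td.pth td.root x).support →
      z ∈ ((td.pth td.root x).dropUntil v hvp).support := by
    intro z hz hzp
    have hts := (td.pth td.root x).take_spec hvp
    rw [← hts] at hzp
    rcases (Walk.mem_support_append_iff _ _).1 hzp with h | h
    · exfalso; rw [htk] at h; exact td.not_mem_pth_root hz h
    · exact h
  have hRp : ((td.pth td.root x).dropUntil v hvp).IsPath := (td.pth_isPath _ _).dropUntil hvp
  have g1 := td.child_getVert_one hu _ hRp (hmem u hu (td.desc_iff.1 hdu))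
  have g2 := td.child_getVert_one hw _ hRp (hmem w hw (td.desc_iff.1 hdw))
  rw [← g1, g2]

lemma exists_child {v x : td.τ} (hd : td.desc v x) (hx : x ≠ v) :
    ∃ y, td.child v y ∧ td.desc y x := by
  classical
  have hvp : v ∈ (td.pth td.root x).support := td.desc_iff.1 hd
  set p := td.pth td.root x with hpdef
  set R := p.dropUntil v hvp with hRdef
  have hRp : R.IsPath := (td.pth_isPath _ _).dropUntil hvp
  have hlen : 0 < R.length := by
    rcases Nat.eq_zero_or_pos R.length with h | h
    · exact absurd (Walk.eq_of_length_eq_zero h).symm hx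
    · exact h
  have hadj : td.tree.Adj v (R.getVert 1) := by
    have := R.adj_getVert_succ (i := 0) hlen
    rwa [Walk.getVert_zero] at this
  set y := R.getVert 1 with hydef
  have hymem : y ∈ R.support := Walk.mem_support_iff_exists_getVert.2 ⟨1, rfl, hlen⟩
  have hytail : y ∈ R.support.tail := by
    have hc := R.support_eq_cons
    rw [hc] at hymem
    rcases List.mem_cons.1 hymem with h | h
    · exact absurd h.symm hadj.ne
    · exact h
  have hnd : p.support.Nodup := (td.pth_isPath _ _).support_nodup
  have hyntk : y ∉ (p.takeUntil v hvp).support := by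
    rw [← p.take_spec hvp, Walk.support_append, List.nodup_append] at hnd
    exact fun hc => hnd.2.2 y hc y hytail rfl
  have hqpath : ((p.takeUntil v hvp).append (Walk.cons hadj Walk.nil)).IsPath := by
    rw [Walk.isPath_def, Walk.support_append]
    simp only [Walk.support_cons, Walk.support_nil, List.tail_cons]
    rw [List.nodup_append]
    refine ⟨((td.pth_isPath _ _).takeUntil hvp).support_nodup, List.nodup_singleton y, ?_⟩
    intro a ha b hb hab
    rw [List.mem_singleton] at hb
    subst hb
    exact hyntk (hab ▸ ha)
  refine ⟨y, ⟨hadj, ?_⟩, ?_⟩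
  · apply td.desc_iff.2
    rw [← td.pth_unique _ hqpath]
    exact (Walk.mem_support_append_iff _ _).2 (Or.inl (Walk.end_mem_support _))
  · exact td.desc_iff.2 (Walk.support_dropUntil_subset _ _ hymem)

lemma mem_pth_of_not_desc {v x t : td.τ} (hnd : ¬ td.desc v t) (hd : td.desc v x) :
    v ∈ (td.pth x t).support := by
  have h1 : v ∈ ((td.pth td.root t).append (td.pth t x)).support := hd _
  rcases (Walk.mem_support_append_iff _ _).1 h1 with h | h
  · exact absurd (td.desc_iff.2 h) hnd
  · have hrev : (td.pth t x).reverse = td.pth x t := td.pth_unique _ ((td.pth_isPath t x).reverse)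
    rw [← hrev, Walk.support_reverse]
    exact List.mem_reverse.2 h

lemma mem_pth_sep {v u w x y : td.τ} (hu : td.child v u) (hw : td.child v w) (huw : u ≠ w)
    (hdx : td.desc u x) (hdy : td.desc w y) : v ∈ (td.pth x y).support := by
  classical
  by_contra hv
  set q := td.pth x y with hqdef
  have hqp : q.IsPath := td.pth_isPath x y
  have hwq : w ∈ q.support := by
    have h1 : w ∈ ((td.pth td.root x).append q).support := hdy _
    rcases (Walk.mem_support_append_iff _ _).1 h1 with h | h
    · exact absurd (td.child_eq_of_desc hu hw hdx (td.desc_iff.2 h)) huw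
    · exact h
  have huq : u ∈ q.support := by
    have h1 : u ∈ ((td.pth td.root y).append q.reverse).support := hdx _
    rcases (Walk.mem_support_append_iff _ _).1 h1 with h | h
    · exact absurd (td.child_eq_of_desc hu hw (td.desc_iff.2 h) hdy) huw
    · rw [Walk.support_reverse] at h; exact List.mem_reverse.1 h
  have key : ∀ (r : td.tree.Walk u w), r.IsPath → v ∈ r.support := by
    intro r hr
    have h2 : (Walk.cons hu.1.symm (Walk.cons hw.1 Walk.nil) : td.tree.Walk u w).IsPath := by
      simp [Walk.isPath_def, hu.1.ne', hw.1.ne, huw]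
    rw [td.pth_unique r hr, ← td.pth_unique _ h2]
    simp
  have hq2 : u ∈ ((q.takeUntil w hwq).append (q.dropUntil w hwq)).support := by
    rw [q.take_spec hwq]; exact huq
  rcases (Walk.mem_support_append_iff _ _).1 hq2 with h | h
  · have hp' : ((q.takeUntil w hwq).dropUntil u h).IsPath := (hqp.takeUntil hwq).dropUntil h
    have hvm := key _ hp'
    exact hv (Walk.support_takeUntil_subset _ _ (Walk.support_dropUntil_subset _ _ hvm))
  · have hp' : ((q.dropUntil w hwq).takeUntil u h).reverse.IsPath :=
      ((hqp.dropUntil hwq).takeUntil h).reverse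
    have hvm := key _ hp'
    rw [Walk.support_reverse] at hvm
    have hvm' := List.mem_reverse.1 hvm
    exact hv (Walk.support_dropUntil_subset _ _ (Walk.support_takeUntil_subset _ _ hvm'))

lemma bags_eq {v u w : td.τ} (hu : td.child v u) (hw : td.child v w)
    (honly : ∀ x, td.child v x → x = u ∨ x = w) (hbu : td.bag u = td.bag v) :
    td.bags v = td.bags u ∪ td.bags w := by
  ext i
  constructor
  · rintro ⟨x, hdx, hix⟩
    by_cases hxv : x = v
    · subst hxv
      exact Or.inl ⟨u, td.desc_self u, hbu.symm ▸ hix⟩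
    · obtain ⟨y, hcy, hdy⟩ := td.exists_child hdx hxv
      rcases honly y hcy with rfl | rfl
      · exact Or.inl ⟨x, hdy, hix⟩
      · exact Or.inr ⟨x, hdy, hix⟩
  · rintro (⟨x, hdx, hix⟩ | ⟨x, hdx, hix⟩)
    · exact ⟨x, td.desc_of_child hu hdx, hix⟩
    · exact ⟨x, td.desc_of_child hw hdx, hix⟩

lemma bag_subset_bags {v u : td.τ} (h : td.bag u = td.bag v) : td.bag v ⊆ td.bags u :=
  fun i hi => ⟨u, td.desc_self u, h.symm ▸ hi⟩

lemma inter_subset_bag {v u w : td.τ} (hu : td.child v u) (hw : td.child v w) (huw : u ≠ w) :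
    td.bags u ∩ td.bags w ⊆ td.bag v := by
  rintro i ⟨⟨x, hdx, hix⟩, ⟨y, hdy, hiy⟩⟩
  exact td.bag_conn i x y (td.pth x y) (td.pth_isPath x y) hix hiy v
    (td.mem_pth_sep hu hw huw hdx hdy)

lemma sep_no_edge {v u w : td.τ} (hu : td.child v u) (hw : td.child v w) (huw : u ≠ w)
    (honly : ∀ x, td.child v x → x = u ∨ x = w) :
    ∀ a b, a ∈ td.bags u → a ∉ td.bag v → b ∈ td.bags w → b ∉ td.bag v → ¬ H.Adj a b := by
  intro a b ha haI hb hbI hadj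
  obtain ⟨t, hat, hbt⟩ := td.bag_edge hadj
  by_cases hdu : td.desc u t
  · exact hbI (td.inter_subset_bag hu hw huw ⟨⟨t, hdu, hbt⟩, hb⟩)
  by_cases hdw : td.desc w t
  · exact haI (td.inter_subset_bag hu hw huw ⟨ha, ⟨t, hdw, hat⟩⟩)
  by_cases hdv : td.desc v t
  · by_cases htv : t = v
    · subst htv; exact haI hat
    · obtain ⟨y, hcy, hdy⟩ := td.exists_child hdv htv
      rcases honly y hcy with rfl | rfl
      · exact hdu hdy
      · exact hdw hdy
  · obtain ⟨x, hdux, hax⟩ := ha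
    exact haI (td.bag_conn a x t (td.pth x t) (td.pth_isPath x t) hax hat v
      (td.mem_pth_of_not_desc hdv (td.desc_of_child hu hdux)))

end TreeDecomp

end TreeLemmas

section GvalHelpers

/-- Every vertex degree is `< n`. -/
lemma deg_lt {n : ℕ} (G : SimpleGraph (Fin n)) (i : Fin n) : deg G i < n := by
  have hsub : G.neighborSet i ⊂ Set.univ := by
    rw [Set.ssubset_univ_iff]
    intro h
    have : i ∈ G.neighborSet i := h ▸ Set.mem_univ i
    exact G.loopless.irrefl i this
  have hlt := Set.ncard_lt_ncard hsub Set.finite_univ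
  rw [Set.ncard_univ, Nat.card_eq_fintype_card, Fintype.card_fin] at hlt
  exact hlt

/-- The defining set of `gval`. -/
noncomputable def gSet {n : ℕ} {H : SimpleGraph (Fin n)} (td : TreeDecomp n H)
    (f : Fin n → ℕ → ℤ) (v : td.τ) (c : Fin n → ℕ) (F : Set (Sym2 (Fin n))) :
    Set (WithTop ℤ) :=
  {x : WithTop ℤ | ∃ G : SimpleGraph (Fin n), SubgraphOn H G (td.bags v) ∧
    edgesIn G (td.bag v) = F ∧ (∀ i ∈ td.bag v, deg G i = c i) ∧
    x = ((∑ i ∈ (Set.toFinite (td.bags v)).toFinset, f i (deg G i) : ℤ) : WithTop ℤ)}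

lemma gval_eq_sInf {n : ℕ} {H : SimpleGraph (Fin n)} (td : TreeDecomp n H)
    (f : Fin n → ℕ → ℤ) (v : td.τ) (c : Fin n → ℕ) (F : Set (Sym2 (Fin n))) :
    gval td f v c F = sInf (gSet td f v c F) := rfl

lemma gSet_finite {n : ℕ} {H : SimpleGraph (Fin n)} (td : TreeDecomp n H)
    (f : Fin n → ℕ → ℤ) (v : td.τ) (c : Fin n → ℕ) (F : Set (Sym2 (Fin n))) :
    (gSet td f v c F).Finite := by
  classical
  apply Set.Finite.subset (Set.finite_range (fun G : SimpleGraph (Fin n) =>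
    ((∑ i ∈ (Set.toFinite (td.bags v)).toFinset, f i (deg G i) : ℤ) : WithTop ℤ)))
  rintro x ⟨G, -, -, -, hx⟩
  exact ⟨G, hx.symm⟩

lemma csInf_mem_finite {s : Set (WithTop ℤ)} (hne : s.Nonempty) (hf : s.Finite) : sInf s ∈ s := by
  obtain ⟨b, hb, hmin⟩ := Set.exists_min_image s id hf hne
  have : sInf s = b := le_antisymm (csInf_le hf.bddBelow hb) (le_csInf hne hmin)
  rw [this]; exact hb

lemma le_sInf_withTop {s : Set (WithTop ℤ)} {a : WithTop ℤ} (h : ∀ y ∈ s, a ≤ y) :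
    a ≤ sInf s := by
  rcases Set.eq_empty_or_nonempty s with rfl | hne
  · rw [WithTop.sInf_empty]; exact le_top
  · exact le_csInf hne h

lemma gval_cases {n : ℕ} {H : SimpleGraph (Fin n)} (td : TreeDecomp n H)
    (f : Fin n → ℕ → ℤ) (v : td.τ) (c : Fin n → ℕ) (F : Set (Sym2 (Fin n))) :
    gval td f v c F = ⊤ ∨
    ∃ G : SimpleGraph (Fin n), SubgraphOn H G (td.bags v) ∧
      edgesIn G (td.bag v) = F ∧ (∀ i ∈ td.bag v, deg G i = c i) ∧
      gval td f v c F =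
        ((∑ i ∈ (Set.toFinite (td.bags v)).toFinset, f i (deg G i) : ℤ) : WithTop ℤ) := by
  rcases Set.eq_empty_or_nonempty (gSet td f v c F) with he | hne
  · left; rw [gval_eq_sInf, he]; exact WithTop.sInf_empty
  · right
    obtain ⟨G, h1, h2, h3, h4⟩ := csInf_mem_finite hne (gSet_finite td f v c F)
    exact ⟨G, h1, h2, h3, by rw [gval_eq_sInf]; exact h4⟩

lemma sum_split {n : ℕ} (su sw : Finset (Fin n)) (a b g : Fin n → ℤ)
    (ha : ∀ i ∈ su, i ∉ sw → g i = a i) (hb : ∀ i ∈ sw, i ∉ su → g i = b i) :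
    ∑ i ∈ su ∪ sw, g i =
      ∑ i ∈ su, a i + ∑ i ∈ sw, b i + ∑ i ∈ su ∩ sw, (g i - a i - b i) := by
  classical
  have h1 := Finset.sum_union_inter (s₁ := su) (s₂ := sw) (f := g)
  have h2 : ∑ i ∈ su ∩ sw, (g i - a i) = ∑ i ∈ su, (g i - a i) :=
    Finset.sum_subset Finset.inter_subset_left (fun i hi hni =>
      sub_eq_zero_of_eq (ha i hi (fun hsw => hni (Finset.mem_inter.2 ⟨hi, hsw⟩))))
  have h3 : ∑ i ∈ su ∩ sw, (g i - b i) = ∑ i ∈ sw, (g i - b i) :=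
    Finset.sum_subset Finset.inter_subset_right (fun i hi hni =>
      sub_eq_zero_of_eq (hb i hi (fun hsu => hni (Finset.mem_inter.2 ⟨hsu, hi⟩))))
  simp only [Finset.sum_sub_distrib] at h2 h3 ⊢
  linarith

/-- Restriction of `G` to edges inside `S`. -/
def restrictG {n : ℕ} (G : SimpleGraph (Fin n)) (S : Set (Fin n)) : SimpleGraph (Fin n) where
  Adj a b := G.Adj a b ∧ a ∈ S ∧ b ∈ S
  symm := ⟨fun a b h => ⟨h.1.symm, h.2.2, h.2.1⟩⟩
  loopless := ⟨fun a h => G.loopless.irrefl a h.1⟩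

lemma restrictG_adj {n : ℕ} {G : SimpleGraph (Fin n)} {S : Set (Fin n)} {a b : Fin n} :
    (restrictG G S).Adj a b ↔ G.Adj a b ∧ a ∈ S ∧ b ∈ S := Iff.rfl

/-- Restriction of `G` to edges inside `S` excluding edges entirely inside `T`. -/
def restrictG' {n : ℕ} (G : SimpleGraph (Fin n)) (S T : Set (Fin n)) : SimpleGraph (Fin n) where
  Adj a b := G.Adj a b ∧ a ∈ S ∧ b ∈ S ∧ ¬(a ∈ T ∧ b ∈ T)
  symm := ⟨fun a b h => ⟨h.1.symm, h.2.2.1, h.2.1, fun hc => h.2.2.2 ⟨hc.2, hc.1⟩⟩⟩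
  loopless := ⟨fun a h => G.loopless.irrefl a h.1⟩

lemma restrictG'_adj {n : ℕ} {G : SimpleGraph (Fin n)} {S T : Set (Fin n)} {a b : Fin n} :
    (restrictG' G S T).Adj a b ↔ G.Adj a b ∧ a ∈ S ∧ b ∈ S ∧ ¬(a ∈ T ∧ b ∈ T) := Iff.rfl

end GvalHelpers

/-- Recursion at a join node `v` with children `u, w` and common bag `I`:
`g(v,c,F)` is the minimum, over all partitions `F = F_u ⊎ F_w` and all decompositions
`c = c_u + c_w` on `I` with `c_u i, c_w i ∈ {0,…,n-1}`, of
`g(u,c_u,F_u) + g(w,c_w,F_w) + ∑_{i ∈ I} (f i (c i) - f i (c_u i) - f i (c_w i))`. -/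
theorem gval_join {n : ℕ} {H : SimpleGraph (Fin n)} (td : TreeDecomp n H)
    (f : Fin n → ℕ → ℤ) (v u w : td.τ) (hu : td.child v u) (hw : td.child v w)
    (huw : u ≠ w) (honly : ∀ x, td.child v x → x = u ∨ x = w)
    (hbu : td.bag u = td.bag v) (hbw : td.bag w = td.bag v)
    (c : Fin n → ℕ) (F : Set (Sym2 (Fin n))) :
    gval td f v c F =
      sInf {y : WithTop ℤ | ∃ (Fu Fw : Set (Sym2 (Fin n))) (cu cw : Fin n → ℕ),
        F = Fu ∪ Fw ∧ Disjoint Fu Fw ∧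
        (∀ i ∈ td.bag v, c i = cu i + cw i ∧ cu i < n ∧ cw i < n) ∧
        y = gval td f u cu Fu + gval td f w cw Fw +
          ((∑ i ∈ (Set.toFinite (td.bag v)).toFinset,
            (f i (c i) - f i (cu i) - f i (cw i)) : ℤ) : WithTop ℤ)} := by
  classical
  have hIu : td.bag v ⊆ td.bags u := td.bag_subset_bags hbu
  have hIw : td.bag v ⊆ td.bags w := td.bag_subset_bags hbw
  have hS : td.bags v = td.bags u ∪ td.bags w := td.bags_eq hu hw honly hbu
  have hInt : td.bags u ∩ td.bags w ⊆ td.bag v := td.inter_subset_bag hu hw huw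
  have hsep := td.sep_no_edge hu hw huw honly
  have hSFu : (Set.toFinite (td.bags v)).toFinset =
      (Set.toFinite (td.bags u)).toFinset ∪ (Set.toFinite (td.bags w)).toFinset := by
    ext i
    simp only [Set.Finite.mem_toFinset, Finset.mem_union]
    rw [hS]; exact Set.mem_union i _ _
  have hIFi : (Set.toFinite (td.bag v)).toFinset =
      (Set.toFinite (td.bags u)).toFinset ∩ (Set.toFinite (td.bags w)).toFinset := by
    ext i
    simp only [Set.Finite.mem_toFinset, Finset.mem_inter]
    exact ⟨fun h => ⟨hIu h, hIw h⟩, fun h => hInt ⟨h.1, h.2⟩⟩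
  refine le_antisymm ?_ ?_
  · -- `gval v ≤ sInf B`
    apply le_sInf_withTop
    rintro y ⟨Fu, Fw, cu, cw, hF, hdisj, hccc, hyeq⟩
    rcases gval_cases td f u cu Fu with htop | ⟨Gu, hGusub, hGuE, hGudeg, hGuval⟩
    · rw [hyeq, htop, top_add, top_add]; exact le_top
    rcases gval_cases td f w cw Fw with htop | ⟨Gw, hGwsub, hGwE, hGwdeg, hGwval⟩
    · rw [hyeq, htop, add_top, top_add]; exact le_top
    rw [hbu] at hGuE hGudeg
    rw [hbw] at hGwE hGwdeg
    have hNu : ∀ i : Fin n, (Gu ⊔ Gw).neighborSet i = Gu.neighborSet i ∪ Gw.neighborSet i := by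
      intro i; ext j
      simp [SimpleGraph.mem_neighborSet, SimpleGraph.sup_adj, Set.mem_union]
    have hdisjN : ∀ i ∈ td.bag v, Disjoint (Gu.neighborSet i) (Gw.neighborSet i) := by
      intro i hi
      rw [Set.disjoint_left]
      intro j hju hjw
      have hju' : Gu.Adj i j := hju
      have hjw' : Gw.Adj i j := hjw
      have hjI : j ∈ td.bag v := hInt ⟨(hGusub.2 hju').2, (hGwsub.2 hjw').2⟩
      have hmemI : ∀ z ∈ (s(i, j) : Sym2 (Fin n)), z ∈ td.bag v := by
        intro z hz
        rcases Sym2.mem_iff.1 hz with rfl | rfl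
        exacts [hi, hjI]
      have heu : s(i, j) ∈ Fu := by
        rw [← hGuE]; exact ⟨(SimpleGraph.mem_edgeSet Gu).2 hju', hmemI⟩
      have hew : s(i, j) ∈ Fw := by
        rw [← hGwE]; exact ⟨(SimpleGraph.mem_edgeSet Gw).2 hjw', hmemI⟩
      exact Set.disjoint_left.1 hdisj heu hew
    have hdegI : ∀ i ∈ td.bag v, deg (Gu ⊔ Gw) i = cu i + cw i := by
      intro i hi
      have hcard := Set.ncard_union_eq (hdisjN i hi) (Set.toFinite _) (Set.toFinite _)
      have hdd : deg (Gu ⊔ Gw) i = deg Gu i + deg Gw i := by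
        show ((Gu ⊔ Gw).neighborSet i).ncard = _
        rw [hNu i]; exact hcard
      rw [hdd, hGudeg i hi, hGwdeg i hi]
    have hdegU : ∀ i ∈ td.bags u, i ∉ td.bag v → deg (Gu ⊔ Gw) i = deg Gu i := by
      intro i hiu hiI
      have hempty : Gw.neighborSet i = ∅ := by
        ext j
        simp only [SimpleGraph.mem_neighborSet, Set.mem_empty_iff_false, iff_false]
        intro hadj
        exact hiI (hInt ⟨hiu, (hGwsub.2 hadj).1⟩)
      show ((Gu ⊔ Gw).neighborSet i).ncard = _
      rw [hNu i, hempty, Set.union_empty]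
      rfl
    have hdegW : ∀ i ∈ td.bags w, i ∉ td.bag v → deg (Gu ⊔ Gw) i = deg Gw i := by
      intro i hiw hiI
      have hempty : Gu.neighborSet i = ∅ := by
        ext j
        simp only [SimpleGraph.mem_neighborSet, Set.mem_empty_iff_false, iff_false]
        intro hadj
        exact hiI (hInt ⟨(hGusub.2 hadj).1, hiw⟩)
      show ((Gu ⊔ Gw).neighborSet i).ncard = _
      rw [hNu i, hempty, Set.empty_union]
      rfl
    have hmem : ((∑ i ∈ (Set.toFinite (td.bags v)).toFinset,
        f i (deg (Gu ⊔ Gw) i) : ℤ) : WithTop ℤ) ∈ gSet td f v c F := by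
      refine ⟨Gu ⊔ Gw, ⟨sup_le hGusub.1 hGwsub.1, ?_⟩, ?_, ?_, rfl⟩
      · intro a b hab
        rw [SimpleGraph.sup_adj] at hab
        rw [hS]
        rcases hab with h | h
        · exact ⟨Or.inl (hGusub.2 h).1, Or.inl (hGusub.2 h).2⟩
        · exact ⟨Or.inr (hGwsub.2 h).1, Or.inr (hGwsub.2 h).2⟩
      · rw [hF, ← hGuE, ← hGwE]
        ext e
        simp only [edgesIn, Set.mem_setOf_eq, SimpleGraph.edgeSet_sup, Set.mem_union]
        tauto
      · intro i hi
        rw [hdegI i hi, (hccc i hi).1]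
    have hA : ∀ i ∈ (Set.toFinite (td.bags u)).toFinset,
        i ∉ (Set.toFinite (td.bags w)).toFinset →
        f i (deg (Gu ⊔ Gw) i) = f i (deg Gu i) := by
      intro i hiu hiw
      simp only [Set.Finite.mem_toFinset] at hiu hiw
      rw [hdegU i hiu (fun hc => hiw (hIw hc))]
    have hB : ∀ i ∈ (Set.toFinite (td.bags w)).toFinset,
        i ∉ (Set.toFinite (td.bags u)).toFinset →
        f i (deg (Gu ⊔ Gw) i) = f i (deg Gw i) := by
      intro i hiw hiu
      simp only [Set.Finite.mem_toFinset] at hiu hiw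
      rw [hdegW i hiw (fun hc => hiu (hIu hc))]
    have hsum : (∑ i ∈ (Set.toFinite (td.bags v)).toFinset, f i (deg (Gu ⊔ Gw) i) : ℤ) =
        (∑ i ∈ (Set.toFinite (td.bags u)).toFinset, f i (deg Gu i)) +
        (∑ i ∈ (Set.toFinite (td.bags w)).toFinset, f i (deg Gw i)) +
        (∑ i ∈ (Set.toFinite (td.bag v)).toFinset,
          (f i (c i) - f i (cu i) - f i (cw i))) := by
      rw [hSFu, hIFi]
      rw [sum_split _ _ (fun i => f i (deg Gu i)) (fun i => f i (deg Gw i))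
        (fun i => f i (deg (Gu ⊔ Gw) i)) hA hB]
      congr 1
      apply Finset.sum_congr rfl
      intro i hi
      rw [Finset.mem_inter] at hi
      have hiI : i ∈ td.bag v :=
        hInt ⟨(Set.Finite.mem_toFinset _).1 hi.1, (Set.Finite.mem_toFinset _).1 hi.2⟩
      rw [hdegI i hiI, hGudeg i hiI, hGwdeg i hiI, (hccc i hiI).1]
    rw [gval_eq_sInf]
    refine le_trans (csInf_le (gSet_finite td f v c F).bddBelow hmem) (le_of_eq ?_)
    rw [hyeq, hGuval, hGwval, hsum]
    push_cast
    ring_nf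
  · -- `sInf B ≤ gval v`
    rcases gval_cases td f v c F with htop | ⟨G, hGsub, hGE, hGdeg, hGval⟩
    · rw [htop]; exact le_top
    set Gu := restrictG G (td.bags u) with hGudef
    set Gw := restrictG' G (td.bags w) (td.bag v) with hGwdef
    have hGuAdj : ∀ a b : Fin n, Gu.Adj a b ↔ G.Adj a b ∧ a ∈ td.bags u ∧ b ∈ td.bags u :=
      fun a b => Iff.rfl
    have hGwAdj : ∀ a b : Fin n, Gw.Adj a b ↔ G.Adj a b ∧ a ∈ td.bags w ∧ b ∈ td.bags w ∧
        ¬(a ∈ td.bag v ∧ b ∈ td.bag v) := fun a b => Iff.rfl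
    have hNG : ∀ i ∈ td.bag v, G.neighborSet i = Gu.neighborSet i ∪ Gw.neighborSet i := by
      intro i hi
      ext j
      simp only [SimpleGraph.mem_neighborSet, Set.mem_union, hGuAdj, hGwAdj]
      constructor
      · intro hadj
        have hjS : j ∈ td.bags v := (hGsub.2 hadj).2
        rw [hS] at hjS
        by_cases hjU : j ∈ td.bags u
        · exact Or.inl ⟨hadj, hIu hi, hjU⟩
        · have hjW : j ∈ td.bags w := hjS.resolve_left hjU
          exact Or.inr ⟨hadj, hIw hi, hjW, fun hc => hjU (hIu hc.2)⟩
      · rintro (h | h)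
        · exact h.1
        · exact h.1
    have hdisjN : ∀ i : Fin n, Disjoint (Gu.neighborSet i) (Gw.neighborSet i) := by
      intro i
      rw [Set.disjoint_left]
      intro j hju hjw
      have h1 : Gu.Adj i j := hju
      have h2 : Gw.Adj i j := hjw
      exact h2.2.2.2 ⟨hInt ⟨h1.2.1, h2.2.1⟩, hInt ⟨h1.2.2, h2.2.2.1⟩⟩
    have hdegIsum : ∀ i ∈ td.bag v, deg G i = deg Gu i + deg Gw i := by
      intro i hi
      show (G.neighborSet i).ncard = _
      rw [hNG i hi]
      exact Set.ncard_union_eq (hdisjN i) (Set.toFinite _) (Set.toFinite _)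
    have hNU : ∀ i ∈ td.bags u, i ∉ td.bag v → G.neighborSet i = Gu.neighborSet i := by
      intro i hiu hiI
      ext j
      simp only [SimpleGraph.mem_neighborSet, hGuAdj]
      constructor
      · intro hadj
        refine ⟨hadj, hiu, ?_⟩
        have hjS : j ∈ td.bags v := (hGsub.2 hadj).2
        rw [hS] at hjS
        by_cases hjU : j ∈ td.bags u
        · exact hjU
        · exfalso
          have hjW : j ∈ td.bags w := hjS.resolve_left hjU
          exact hsep i j hiu hiI hjW (fun hc => hjU (hIu hc)) (hGsub.1 hadj)
      · exact fun h => h.1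
    have hNW : ∀ i ∈ td.bags w, i ∉ td.bag v → G.neighborSet i = Gw.neighborSet i := by
      intro i hiw hiI
      ext j
      simp only [SimpleGraph.mem_neighborSet, hGwAdj]
      constructor
      · intro hadj
        have hjS : j ∈ td.bags v := (hGsub.2 hadj).2
        rw [hS] at hjS
        by_cases hjW : j ∈ td.bags w
        · exact ⟨hadj, hiw, hjW, fun hc => hiI hc.1⟩
        · exfalso
          have hjU : j ∈ td.bags u := hjS.resolve_right hjW
          exact hsep j i hjU (fun hc => hjW (hIw hc)) hiw hiI (hGsub.1 hadj).symm
      · exact fun h => h.1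
    have hdegU2 : ∀ i ∈ td.bags u, i ∉ td.bag v → deg G i = deg Gu i := by
      intro i h1 h2
      show (G.neighborSet i).ncard = _
      rw [hNU i h1 h2]
      rfl
    have hdegW2 : ∀ i ∈ td.bags w, i ∉ td.bag v → deg G i = deg Gw i := by
      intro i h1 h2
      show (G.neighborSet i).ncard = _
      rw [hNW i h1 h2]
      rfl
    have hGuSub : SubgraphOn H Gu (td.bags u) :=
      ⟨fun a b h => hGsub.1 h.1, fun a b h => ⟨h.2.1, h.2.2⟩⟩
    have hGwSub : SubgraphOn H Gw (td.bags w) :=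
      ⟨fun a b h => hGsub.1 h.1, fun a b h => ⟨h.2.1, h.2.2.1⟩⟩
    have hGuE : edgesIn Gu (td.bag u) = F := by
      rw [hbu, ← hGE]
      ext e
      refine Sym2.ind (fun a b => ?_) e
      simp only [edgesIn, Set.mem_setOf_eq, SimpleGraph.mem_edgeSet, Sym2.mem_iff]
      constructor
      · rintro ⟨h, h2⟩; exact ⟨h.1, h2⟩
      · rintro ⟨h, h2⟩
        exact ⟨⟨h, hIu (h2 a (Or.inl rfl)), hIu (h2 b (Or.inr rfl))⟩, h2⟩
    have hGwE : edgesIn Gw (td.bag w) = (∅ : Set (Sym2 (Fin n))) := by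
      ext e
      refine Sym2.ind (fun a b => ?_) e
      simp only [edgesIn, Set.mem_setOf_eq, SimpleGraph.mem_edgeSet, Sym2.mem_iff,
        Set.mem_empty_iff_false, iff_false]
      rintro ⟨h, h2⟩
      exact h.2.2.2 ⟨hbw ▸ h2 a (Or.inl rfl), hbw ▸ h2 b (Or.inr rfl)⟩
    have hle_u : gval td f u (fun i => deg Gu i) F ≤
        ((∑ i ∈ (Set.toFinite (td.bags u)).toFinset, f i (deg Gu i) : ℤ) : WithTop ℤ) := by
      rw [gval_eq_sInf]
      exact csInf_le (gSet_finite td f u _ F).bddBelow ⟨Gu, hGuSub, hGuE, fun i _ => rfl, rfl⟩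
    have hle_w : gval td f w (fun i => deg Gw i) (∅ : Set (Sym2 (Fin n))) ≤
        ((∑ i ∈ (Set.toFinite (td.bags w)).toFinset, f i (deg Gw i) : ℤ) : WithTop ℤ) := by
      rw [gval_eq_sInf]
      exact csInf_le (gSet_finite td f w _ _).bddBelow ⟨Gw, hGwSub, hGwE, fun i _ => rfl, rfl⟩
    refine le_trans (csInf_le (a := gval td f u (fun i => deg Gu i) F +
        gval td f w (fun i => deg Gw i) (∅ : Set (Sym2 (Fin n))) +
        ((∑ i ∈ (Set.toFinite (td.bag v)).toFinset,
          (f i (c i) - f i (deg Gu i) - f i (deg Gw i)) : ℤ) : WithTop ℤ)) ?_ ?_) ?_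
    · -- BddBelow
      apply Set.Finite.bddBelow
      apply Set.Finite.subset (Set.Finite.union (Set.finite_singleton (⊤ : WithTop ℤ))
        (Set.finite_range (fun p : SimpleGraph (Fin n) × SimpleGraph (Fin n) =>
          ((∑ i ∈ (Set.toFinite (td.bags u)).toFinset, f i (deg p.1 i) : ℤ) : WithTop ℤ) +
          ((∑ i ∈ (Set.toFinite (td.bags w)).toFinset, f i (deg p.2 i) : ℤ) : WithTop ℤ) +
          ((∑ i ∈ (Set.toFinite (td.bag v)).toFinset,
            (f i (c i) - f i (deg p.1 i) - f i (deg p.2 i)) : ℤ) : WithTop ℤ))))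
      rintro y ⟨Fu', Fw', cu', cw', -, -, -, hyeq⟩
      rcases gval_cases td f u cu' Fu' with htop1 | ⟨G1, -, -, hdeg1, hval1⟩
      · left
        rw [Set.mem_singleton_iff, hyeq, htop1, top_add, top_add]
      rcases gval_cases td f w cw' Fw' with htop2 | ⟨G2, -, -, hdeg2, hval2⟩
      · left
        rw [Set.mem_singleton_iff, hyeq, htop2, add_top, top_add]
      right
      refine ⟨(G1, G2), ?_⟩
      have hsc : (∑ i ∈ (Set.toFinite (td.bag v)).toFinset,
          (f i (c i) - f i (deg G1 i) - f i (deg G2 i)) : ℤ) =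
          (∑ i ∈ (Set.toFinite (td.bag v)).toFinset,
          (f i (c i) - f i (cu' i) - f i (cw' i)) : ℤ) := by
        apply Finset.sum_congr rfl
        intro i hi
        have hiv : i ∈ td.bag v := (Set.Finite.mem_toFinset _).1 hi
        rw [hdeg1 i (hbu ▸ hiv), hdeg2 i (hbw ▸ hiv)]
      dsimp only
      rw [hsc, hyeq, hval1, hval2]
    · -- membership
      exact ⟨F, ∅, (fun i => deg Gu i), (fun i => deg Gw i), (Set.union_empty F).symm,
        (by simp), fun i hi => ⟨(hGdeg i hi).symm.trans (hdegIsum i hi), deg_lt Gu i,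
          deg_lt Gw i⟩, rfl⟩
    · -- value comparison
      rw [hGval]
      have hA2 : ∀ i ∈ (Set.toFinite (td.bags u)).toFinset,
          i ∉ (Set.toFinite (td.bags w)).toFinset →
          f i (deg G i) = f i (deg Gu i) := by
        intro i hiu hiw
        simp only [Set.Finite.mem_toFinset] at hiu hiw
        rw [hdegU2 i hiu (fun hc => hiw (hIw hc))]
      have hB2 : ∀ i ∈ (Set.toFinite (td.bags w)).toFinset,
          i ∉ (Set.toFinite (td.bags u)).toFinset →
          f i (deg G i) = f i (deg Gw i) := by
        intro i hiw hiu
        simp only [Set.Finite.mem_toFinset] at hiu hiw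
        rw [hdegW2 i hiw (fun hc => hiu (hIu hc))]
      have hsum2 : (∑ i ∈ (Set.toFinite (td.bags v)).toFinset, f i (deg G i) : ℤ) =
          (∑ i ∈ (Set.toFinite (td.bags u)).toFinset, f i (deg Gu i)) +
          (∑ i ∈ (Set.toFinite (td.bags w)).toFinset, f i (deg Gw i)) +
          (∑ i ∈ (Set.toFinite (td.bag v)).toFinset,
            (f i (c i) - f i (deg Gu i) - f i (deg Gw i))) := by
        rw [hSFu, hIFi]
        rw [sum_split _ _ (fun i => f i (deg Gu i)) (fun i => f i (deg Gw i))
          (fun i => f i (deg G i)) hA2 hB2]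
        congr 1
        apply Finset.sum_congr rfl
        intro i hi
        rw [Finset.mem_inter] at hi
        have hiI : i ∈ td.bag v :=
          hInt ⟨(Set.Finite.mem_toFinset _).1 hi.1, (Set.Finite.mem_toFinset _).1 hi.2⟩
        rw [hGdeg i hiI]
      refine le_trans (add_le_add (add_le_add hle_u hle_w) le_rfl) (le_of_eq ?_)
      rw [hsum2]
      push_cast
      ring_nf
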